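/- arXiv:1403.5807 — 2 statements merged into one kernel-verified Lean document; each statement's English description precedes it below -/
import Mathlib

section
/- Let G be a finite simple graph with a proper edge coloring f, let v be a vertex, and let (e_1,…,e_k) be a saturated f-fan at v with e_k = v u_k and c a color missing both at v and at u_k. Then the downshift coloring g, defined by g(e_k) = c, g(e_j) = f(e_{j+1}) for j = 1,…,k−1, and g(e) = f(e) for all other edges e, is a proper edge coloring of G. -/
attribute [local instance] Classical.propDecidable

variable {V : Type*}

/-- `f` is a proper `t`-edge coloring of `G`: edges get colors in `{1,…,t}` and
adjacent (distinct, sharing a vertex) edges get different colors. -/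
def IsProperEdgeColoring (G : SimpleGraph V) (t : ℕ) (f : Sym2 V → ℕ) : Prop :=
  (∀ e ∈ G.edgeSet, f e ∈ Finset.Icc 1 t) ∧
  ∀ e₁ ∈ G.edgeSet, ∀ e₂ ∈ G.edgeSet, e₁ ≠ e₂ → (∃ v, v ∈ e₁ ∧ v ∈ e₂) → f e₁ ≠ f e₂

/-- The two-colored subgraph `G_f(a,b)` induced by the edges colored `a` or `b`. -/
def twoColorSub (G : SimpleGraph V) (f : Sym2 V → ℕ) (a b : ℕ) : SimpleGraph V :=
  SimpleGraph.fromEdgeSet {e | e ∈ G.edgeSet ∧ (f e = a ∨ f e = b)}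

/-- Swap the colors `a` and `b`. -/
def swapCol (a b c : ℕ) : ℕ := if c = a then b else if c = b then a else c

/-- The interchange (Kempe change) of colors `a,b` on the connected component of
`v` in the two-colored subgraph `G_f(a,b)`. -/
noncomputable def interchange (G : SimpleGraph V) (f : Sym2 V → ℕ) (a b : ℕ) (v : V) :
    Sym2 V → ℕ :=
  fun e => if ∀ x ∈ e, (twoColorSub G f a b).Reachable v x then swapCol a b (f e) else f e

/-- One interchange step between colorings, using colors from `{1,…,t}`. -/
def KempeStep (G : SimpleGraph V) (t : ℕ) (f g : Sym2 V → ℕ) : Prop :=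
  ∃ a ∈ Finset.Icc 1 t, ∃ b ∈ Finset.Icc 1 t, ∃ v, g = interchange G f a b v

/-- Kempe equivalence: transformability by a finite sequence of interchanges. -/
def KempeEquiv (G : SimpleGraph V) (t : ℕ) (f g : Sym2 V → ℕ) : Prop :=
  Relation.ReflTransGen (KempeStep G t) f g

/-- The chromatic index: least `t` admitting a proper `t`-edge coloring. -/
noncomputable def chromaticIndex (G : SimpleGraph V) : ℕ :=
  sInf {t | ∃ f, IsProperEdgeColoring G t f}

/-- The set of colors appearing at `v` under `f`. -/
def colorsAt (G : SimpleGraph V) (f : Sym2 V → ℕ) (v : V) : Set ℕ :=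
  {c | ∃ e ∈ G.edgeSet, v ∈ e ∧ f e = c}

/-- downshifting on a saturated fan yields a proper edge coloring. -/
theorem downshift_isProper (G : SimpleGraph V) (t : ℕ) (f : Sym2 V → ℕ)
    (hf : IsProperEdgeColoring G t f)
    (v : V) (k : ℕ) (hk : 0 < k) (u : Fin k → V) (hinj : Function.Injective u)
    (hadj : ∀ i, G.Adj v (u i))
    (hfan : ∀ i j : Fin k, (j : ℕ) = (i : ℕ) + 1 → f s(v, u j) ∉ colorsAt G f (u i))
    (c : ℕ) (hct : c ∈ Finset.Icc 1 t)
    (hcv : c ∉ colorsAt G f v) (hcu : c ∉ colorsAt G f (u ⟨k - 1, by omega⟩))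
    (g : Sym2 V → ℕ)
    (hg1 : g s(v, u ⟨k - 1, by omega⟩) = c)
    (hg2 : ∀ i j : Fin k, (j : ℕ) = (i : ℕ) + 1 → g s(v, u i) = f s(v, u j))
    (hg3 : ∀ e, (∀ i, e ≠ s(v, u i)) → g e = f e) :
    IsProperEdgeColoring G t g := by
  obtain ⟨hf1, hf2⟩ := hf
  have hedge : ∀ i : Fin k, s(v, u i) ∈ G.edgeSet := fun i =>
    G.mem_edgeSet.mpr (hadj i)
  have hinjE : ∀ i j : Fin k, s(v, u i) = s(v, u j) → i = j := fun i j h =>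
    hinj (Sym2.congr_right.mp h)
  have hcolv : ∀ i : Fin k, f s(v, u i) ∈ colorsAt G f v := fun i =>
    ⟨s(v, u i), hedge i, Sym2.mem_mk_left _ _, rfl⟩
  have hval : ∀ i : Fin k, (i = ⟨k - 1, by omega⟩ ∧ g s(v, u i) = c) ∨
      ∃ j : Fin k, (j : ℕ) = (i : ℕ) + 1 ∧ g s(v, u i) = f s(v, u j) := by
    intro i
    by_cases h : (i : ℕ) = k - 1
    · left
      have : i = ⟨k - 1, by omega⟩ := Fin.ext h
      exact ⟨this, by rw [this, hg1]⟩
    · right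
      have hlt : (i : ℕ) + 1 < k := by have := i.isLt; omega
      exact ⟨⟨(i : ℕ) + 1, hlt⟩, rfl, hg2 i ⟨(i : ℕ) + 1, hlt⟩ rfl⟩
  -- key: a fan edge vs a non-fan edge sharing a vertex
  have key : ∀ (i : Fin k) (e : Sym2 V), e ∈ G.edgeSet → (∀ j, e ≠ s(v, u j)) →
      (∃ w, w ∈ s(v, u i) ∧ w ∈ e) → g s(v, u i) ≠ f e := by
    intro i e he hne ⟨w, hw1, hw2⟩
    rcases Sym2.mem_iff.mp hw1 with hwv | hwu
    all_goals rcases hval i with ⟨hi, hgc⟩ | ⟨j, hj, hgf⟩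
    · -- w = v, g = c
      rw [hgc]
      intro hcontra
      exact hcv ⟨e, he, hwv ▸ hw2, hcontra.symm⟩
    · -- w = v, g = f e_j
      rw [hgf]
      exact hf2 _ (hedge j) _ he (fun h => hne j h.symm) ⟨v, Sym2.mem_mk_left _ _, hwv ▸ hw2⟩
    · -- w = u i, g = c
      rw [hgc]
      intro hcontra
      exact hcu ⟨e, he, hi ▸ hwu ▸ hw2, hcontra.symm⟩
    · -- w = u i, g = f e_j, use hfan
      rw [hgf]
      intro hcontra
      exact hfan i j hj ⟨e, he, hwu ▸ hw2, hcontra.symm⟩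
  constructor
  · intro e he
    by_cases h : ∃ i, e = s(v, u i)
    · obtain ⟨i, rfl⟩ := h
      rcases hval i with ⟨_, hgc⟩ | ⟨j, _, hgf⟩
      · rw [hgc]; exact hct
      · rw [hgf]; exact hf1 _ (hedge j)
    · push_neg at h
      rw [hg3 e h]; exact hf1 e he
  · intro e₁ he₁ e₂ he₂ hne12 hshare
    obtain ⟨w, hw1, hw2⟩ := hshare
    by_cases h1 : ∃ i, e₁ = s(v, u i) <;> by_cases h2 : ∃ j, e₂ = s(v, u j)
    · obtain ⟨i, rfl⟩ := h1
      obtain ⟨j, rfl⟩ := h2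
      have hij : i ≠ j := fun h => hne12 (by rw [h])
      rcases hval i with ⟨hi, hgi⟩ | ⟨i', hi', hgi⟩ <;>
        rcases hval j with ⟨hj, hgj⟩ | ⟨j', hj', hgj⟩
      · exact absurd (hi.trans hj.symm) hij
      · rw [hgi, hgj]
        intro hcontra
        exact hcv (hcontra ▸ hcolv j')
      · rw [hgi, hgj]
        intro hcontra
        exact hcv (hcontra.symm ▸ hcolv i')
      · rw [hgi, hgj]
        have hij' : i' ≠ j' := by
          intro h
          apply hij
          apply Fin.ext
          have : (i' : ℕ) = (j' : ℕ) := by rw [h]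
          omega
        exact hf2 _ (hedge i') _ (hedge j') (fun h => hij' (hinjE _ _ h))
          ⟨v, Sym2.mem_mk_left _ _, Sym2.mem_mk_left _ _⟩
    · obtain ⟨i, rfl⟩ := h1
      push_neg at h2
      rw [hg3 e₂ h2]
      exact key i e₂ he₂ h2 ⟨w, hw1, hw2⟩
    · obtain ⟨j, rfl⟩ := h2
      push_neg at h1
      rw [hg3 e₁ h1]
      exact fun h => key j e₁ he₁ h1 ⟨w, hw2, hw1⟩ h.symm
    · push_neg at h1; push_neg at h2
      rw [hg3 e₁ h1, hg3 e₂ h2]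
      exact hf2 e₁ he₁ e₂ he₂ hne12 ⟨w, hw1, hw2⟩
end

section
/- Let G be a finite simple graph in which the subgraph G_Δ induced by the vertices of maximum degree is acyclic (a forest). Then G has a proper Δ(G)-edge coloring, i.e., χ'(G) = Δ(G) (G is Class 1), provided G has at least one edge. -/
attribute [local instance] Classical.propDecidable

variable {V : Type*}

/-!
Induction on the number of edges. Because the vertices of degree `Δ` induce a forest, some edge
`xy` has the property that every other neighbour of `x` has degree `< Δ`: take a leaf `x` of
that forest and its neighbour `y`, or, if the forest has no edge, a vertex of degree `Δ`, or any
edge at all. Colour `G - xy` with `Δ` colours by induction (its vertices of degree `Δ` still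
induce a forest). Then `x`, `y` and all neighbours of `x` miss a colour, which is exactly what
Vizing's fan argument needs to colour `xy` as well. Conversely the `Δ` edges at a vertex of
maximum degree need `Δ` distinct colours.
-/

open SimpleGraph

namespace SimpleGraph

variable {G : SimpleGraph V}

lemma ConnectedComponent.degree_toSimpleGraph [Fintype V] [DecidableRel G.Adj]
    (C : G.ConnectedComponent) (v : C) : C.toSimpleGraph.degree v = G.degree v := by
  convert degree_induce_of_neighborSet_subset (s := C.supp)
    fun _ hw => C.mem_supp_of_adj_mem_supp v.2 hw <;> rfl

lemma IsAcyclic.exists_existsUnique_adj [Fintype V] (hG : G.IsAcyclic) {x y : V}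
    (hxy : G.Adj x y) : ∃ u, ∃! v, G.Adj u v := by
  set C := G.connectedComponentMk x
  have : Nontrivial C := ⟨⟨x, rfl⟩, ⟨y, (ConnectedComponent.eq.2 hxy.reachable).symm⟩,
    fun h => hxy.ne (congrArg Subtype.val h)⟩
  obtain ⟨u, hu⟩ := (hG.isTree_connectedComponent C).exists_vert_degree_one_of_nontrivial
  rw [C.degree_toSimpleGraph] at hu
  exact ⟨u, degree_eq_one_iff_existsUnique_adj.1 hu⟩

lemma exists_adj_forall_adj_notMem [Fintype V] {s : Set V} (hs : (G.induce s).IsAcyclic)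
    (hG : G.edgeSet.Nonempty) : ∃ x y, G.Adj x y ∧ ∀ z, G.Adj x z → z ≠ y → z ∉ s := by
  by_cases hsE : ∃ u v : s, (G.induce s).Adj u v
  · obtain ⟨u, v, huv⟩ := hsE
    obtain ⟨x, y, hxy, hy⟩ := hs.exists_existsUnique_adj huv
    exact ⟨x, y, hxy, fun z hz hzy hzs => hzy congr($(hy ⟨z, hzs⟩ hz).1)⟩
  push Not at hsE
  by_cases hsAdj : ∃ x ∈ s, ∃ y, G.Adj x y
  · obtain ⟨x, hx, y, hxy⟩ := hsAdj
    exact ⟨x, y, hxy, fun z hz _ hzs => hsE ⟨x, hx⟩ ⟨z, hzs⟩ hz⟩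
  push Not at hsAdj
  obtain ⟨⟨a, b⟩, hab⟩ := hG
  exact ⟨a, b, hab, fun z hz _ hzs => hsAdj z hzs a hz.symm⟩

/-- Handshake in the component `C` of `a`: `2 (|C| - 1) ≤ 2 |E(C)| = ∑ deg`, whereas three
vertices of degree at most one give `∑ deg ≤ 2 (|C| - 3) + 3`. -/
lemma not_reachable_of_degree_le_one [Fintype V] [DecidableRel G.Adj]
    (hG : ∀ v, G.degree v ≤ 2) {a b c : V} (hab : a ≠ b) (hac : a ≠ c) (hbc : b ≠ c)
    (ha : G.degree a ≤ 1) (hb : G.degree b ≤ 1) (hc : G.degree c ≤ 1) (hrb : G.Reachable a b) :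
    ¬ G.Reachable a c := by
  intro hrc
  set C := G.connectedComponentMk a
  set T : Finset C := {⟨a, rfl⟩, ⟨b, (ConnectedComponent.eq.2 hrb).symm⟩,
    ⟨c, (ConnectedComponent.eq.2 hrc).symm⟩}
  have hT : T.card = 3 := Finset.card_eq_three.2 ⟨_, _, _, fun h => hab (congrArg Subtype.val h),
    fun h => hac (congrArg Subtype.val h), fun h => hbc (congrArg Subtype.val h), rfl⟩
  have hconn := C.connected_toSimpleGraph.card_vert_le_card_edgeSet_add_one
  rw [Nat.card_eq_fintype_card, Nat.card_eq_fintype_card, ← edgeFinset_card] at hconn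
  have hsum := C.toSimpleGraph.sum_degrees_eq_twice_card_edges
  rw [← Finset.sum_sdiff (Finset.subset_univ T)] at hsum
  have hrest : ∑ v ∈ Finset.univ \ T, C.toSimpleGraph.degree v ≤ (Finset.univ \ T).card • 2 :=
    Finset.sum_le_card_nsmul _ _ _ fun v _ => C.degree_toSimpleGraph v ▸ hG v
  have hTsum : ∑ v ∈ T, C.toSimpleGraph.degree v ≤ T.card • 1 := by
    refine Finset.sum_le_card_nsmul _ _ _ fun v hv => C.degree_toSimpleGraph v ▸ ?_
    simp only [T, Finset.mem_insert, Finset.mem_singleton] at hv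
    rcases hv with rfl | rfl | rfl <;> assumption
  rw [Finset.card_sdiff_of_subset (Finset.subset_univ T), hT, Finset.card_univ] at hrest
  have := Finset.card_le_univ T
  simp only [smul_eq_mul] at hrest hTsum
  omega

lemma deleteEdges_sup_edge {x y : V} (h : G.Adj x y) : G.deleteEdges {s(x, y)} ⊔ edge x y = G := by
  ext u v
  simp only [sup_adj, deleteEdges_adj, Set.mem_singleton_iff, edge_adj]
  refine ⟨?_, fun huv => ?_⟩
  · rintro (⟨huv, -⟩ | ⟨⟨rfl, rfl⟩ | ⟨rfl, rfl⟩, -⟩)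
    exacts [huv, h, h.symm]
  by_cases he : s(u, v) = s(x, y)
  · exact .inr ⟨by simpa [Sym2.eq_iff] using he, huv.ne⟩
  · exact .inl ⟨huv, he⟩

lemma degree_deleteEdges_lt [Fintype V] [DecidableRel G.Adj] {x y : V} (h : G.Adj x y) :
    (G.deleteEdges {s(x, y)}).degree x < G.degree x := by
  simp_rw [← card_neighborFinset_eq_degree]
  refine Finset.card_lt_card ⟨fun w hw => ?_, fun hsub => ?_⟩
  · simp only [mem_neighborFinset, deleteEdges_adj] at hw ⊢
    exact hw.1
  · have := hsub ((G.mem_neighborFinset x y).2 h)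
    simp at this

end SimpleGraph

lemma swapCol_eq_swap (a b : ℕ) : swapCol a b = Equiv.swap a b := by
  funext c
  rw [swapCol, Equiv.swap_apply_def]

def MissingAt (G : SimpleGraph V) (t : ℕ) (f : Sym2 V → ℕ) (v : V) (c : ℕ) : Prop :=
  c ∈ Finset.Icc 1 t ∧ c ∉ colorsAt G f v

section Coloring

variable {G H : SimpleGraph V} {t : ℕ} {f : Sym2 V → ℕ} {u v : V} {a b c : ℕ}

lemma mem_colorsAt : c ∈ colorsAt G f v ↔ ∃ w, G.Adj v w ∧ f s(v, w) = c := by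
  constructor
  · rintro ⟨e, he, hve, rfl⟩
    obtain ⟨w, rfl⟩ := Sym2.mem_iff_exists.1 hve
    exact ⟨w, he, rfl⟩
  · rintro ⟨w, hw, rfl⟩
    exact ⟨s(v, w), hw, Sym2.mem_mk_left v w, rfl⟩

lemma colorsAt_update_of_notMem {e : Sym2 V} (hv : v ∉ e) :
    colorsAt G (Function.update f e c) v = colorsAt G f v := by
  ext c'
  refine exists_congr fun e' => and_congr_right fun _ => and_congr_right fun hve' => ?_
  rw [Function.update_of_ne (by rintro rfl; exact hv hve')]

lemma IsProperEdgeColoring.injOn_neighborSet (hf : IsProperEdgeColoring G t f) (v : V) :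
    Set.InjOn (fun w => f s(v, w)) (G.neighborSet v) := by
  intro w₁ hw₁ w₂ hw₂ heq
  by_contra hne
  refine hf.2 _ hw₁ _ hw₂ ?_ ⟨v, Sym2.mem_mk_left _ _, Sym2.mem_mk_left _ _⟩ heq
  rw [Ne, Sym2.eq_iff]
  rintro (⟨-, h⟩ | ⟨-, h⟩)
  exacts [hne h, hw₁.ne h.symm]

lemma IsProperEdgeColoring.degree_le_card [Fintype V] [DecidableRel H.Adj]
    (hf : IsProperEdgeColoring G t f) (hHG : H ≤ G) (S : Finset ℕ)
    (hS : ∀ w, H.Adj v w → f s(v, w) ∈ S) : H.degree v ≤ S.card := by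
  rw [← card_neighborFinset_eq_degree]
  refine Finset.card_le_card_of_injOn _ (fun w hw => hS w ((H.mem_neighborFinset v w).1 hw)) ?_
  exact (hf.injOn_neighborSet v).mono fun w hw => hHG ((H.mem_neighborFinset v w).1 hw)

lemma IsProperEdgeColoring.degree_le [Fintype V] [DecidableRel G.Adj]
    (hf : IsProperEdgeColoring G t f) (v : V) : G.degree v ≤ t := by
  simpa using hf.degree_le_card le_rfl (Finset.Icc 1 t) fun w hw => hf.1 _ hw

lemma exists_missingAt [Fintype V] [DecidableRel G.Adj] (f : Sym2 V → ℕ)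
    (h : G.degree v < t) : ∃ c, MissingAt G t f v c := by
  set S := (G.neighborFinset v).image fun w => f s(v, w)
  have hS : S.card < (Finset.Icc 1 t).card := by
    simpa using Finset.card_image_le.trans_lt (h.trans_eq (by simp) : (G.neighborFinset v).card < _)
  obtain ⟨c, hc, hcS⟩ := Finset.exists_mem_notMem_of_card_lt_card hS
  refine ⟨c, hc, fun hc' => hcS ?_⟩
  obtain ⟨w, hw, rfl⟩ := mem_colorsAt.1 hc'
  exact Finset.mem_image_of_mem _ ((G.mem_neighborFinset v w).2 hw)

lemma IsProperEdgeColoring.update_sup_edge (hf : IsProperEdgeColoring H t f) (huv : u ≠ v)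
    (hu : MissingAt H t f u c) (hv : MissingAt H t f v c) :
    IsProperEdgeColoring (H ⊔ edge u v) t (Function.update f s(u, v) c) := by
  have hE : (H ⊔ edge u v).edgeSet = insert s(u, v) H.edgeSet := by
    rw [edgeSet_sup, edgeSet_edge_of_ne huv, Set.union_singleton]
  have hfree : ∀ e ∈ H.edgeSet, ∀ w ∈ e, w ∈ s(u, v) → f e ≠ c := by
    intro e he w hwe hw hfe
    rcases Sym2.mem_iff.1 hw with rfl | rfl
    exacts [hu.2 ⟨e, he, hwe, hfe⟩, hv.2 ⟨e, he, hwe, hfe⟩]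
  rw [IsProperEdgeColoring, hE]
  refine ⟨fun e he => ?_, fun e₁ he₁ e₂ he₂ hne ⟨w, hw₁, hw₂⟩ => ?_⟩
  · rcases eq_or_ne e s(u, v) with rfl | he'
    · simpa using hu.1
    · rw [Function.update_of_ne he']
      exact hf.1 e (he.resolve_left he')
  rcases eq_or_ne e₁ s(u, v) with rfl | he₁'
  · have he₂' : e₂ ≠ s(u, v) := hne.symm
    rw [Function.update_self, Function.update_of_ne he₂']
    exact (hfree e₂ (he₂.resolve_left he₂') w hw₂ hw₁).symm
  rw [Function.update_of_ne he₁']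
  rcases eq_or_ne e₂ s(u, v) with rfl | he₂'
  · rw [Function.update_self]
    exact hfree e₁ (he₁.resolve_left he₁') w hw₁ hw₂
  rw [Function.update_of_ne he₂']
  exact hf.2 e₁ (he₁.resolve_left he₁') e₂ (he₂.resolve_left he₂') hne ⟨w, hw₁, hw₂⟩

lemma IsProperEdgeColoring.missingAt_update (hf : IsProperEdgeColoring H t f) (he : s(u, v) ∈ H.edgeSet)
    (hc : f s(u, v) ≠ c) : MissingAt H t (Function.update f s(u, v) c) u (f s(u, v)) := by
  refine ⟨hf.1 _ he, fun ⟨e, he', hue, hfe⟩ => ?_⟩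
  rcases eq_or_ne e s(u, v) with rfl | hne
  · exact hc (by rw [← hfe, Function.update_self])
  · rw [Function.update_of_ne hne] at hfe
    exact hf.2 e he' _ he hne ⟨u, hue, Sym2.mem_mk_left u v⟩ hfe

end Coloring

section Interchange

variable {G : SimpleGraph V} {t : ℕ} {f : Sym2 V → ℕ} {a b c : ℕ} {u v w : V} {e : Sym2 V}

lemma twoColorSub_adj :
    (twoColorSub G f a b).Adj u w ↔ G.Adj u w ∧ (f s(u, w) = a ∨ f s(u, w) = b) := by
  rw [twoColorSub, fromEdgeSet_adj, Set.mem_ofPred_eq, mem_edgeSet]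
  exact ⟨fun h => h.1, fun h => ⟨h, h.1.ne⟩⟩

lemma twoColorSub_le : twoColorSub G f a b ≤ G := fun _ _ h => (twoColorSub_adj.1 h).1

lemma IsProperEdgeColoring.degree_twoColorSub_le_two [Fintype V]
    (hf : IsProperEdgeColoring G t f) (v : V) : (twoColorSub G f a b).degree v ≤ 2 :=
  (hf.degree_le_card twoColorSub_le {a, b} fun w hw => by
    rcases (twoColorSub_adj.1 hw).2 with h | h <;> simp [h]).trans Finset.card_le_two

lemma IsProperEdgeColoring.degree_twoColorSub_le_one [Fintype V]
    (hf : IsProperEdgeColoring G t f) (hv : a ∉ colorsAt G f v ∨ b ∉ colorsAt G f v) :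
    (twoColorSub G f a b).degree v ≤ 1 := by
  have hcol : ∀ w, (twoColorSub G f a b).Adj v w → f s(v, w) ∈ colorsAt G f v :=
    fun w hw => mem_colorsAt.2 ⟨w, (twoColorSub_adj.1 hw).1, rfl⟩
  rcases hv with hv | hv
  · refine hf.degree_le_card twoColorSub_le {b} fun w hw => ?_
    rcases (twoColorSub_adj.1 hw).2 with h | h
    exacts [(hv (h ▸ hcol w hw)).elim, Finset.mem_singleton.2 h]
  · refine hf.degree_le_card twoColorSub_le {a} fun w hw => ?_
    rcases (twoColorSub_adj.1 hw).2 with h | h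
    exacts [Finset.mem_singleton.2 h, (hv (h ▸ hcol w hw)).elim]

lemma interchange_apply_of_ne (ha : f e ≠ a) (hb : f e ≠ b) :
    interchange G f a b v e = f e := by
  rw [interchange, swapCol_eq_swap, Equiv.swap_apply_of_ne_of_ne ha hb, ite_self]

lemma interchange_apply_of_not_reachable (hu : ¬ (twoColorSub G f a b).Reachable v u)
    (hue : u ∈ e) : interchange G f a b v e = f e :=
  if_neg fun h => hu (h u hue)

lemma interchange_apply_of_reachable (hu : (twoColorSub G f a b).Reachable v u)
    (he : e ∈ G.edgeSet) (hue : u ∈ e) : interchange G f a b v e = Equiv.swap a b (f e) := by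
  by_cases hab : f e = a ∨ f e = b
  · obtain ⟨w, rfl⟩ := Sym2.mem_iff_exists.1 hue
    have hw := hu.trans (twoColorSub_adj.2 ⟨he, hab⟩).reachable
    rw [interchange, if_pos (by simpa using ⟨hu, hw⟩), swapCol_eq_swap]
  · push Not at hab
    rw [interchange_apply_of_ne hab.1 hab.2, Equiv.swap_apply_of_ne_of_ne hab.1 hab.2]

lemma swap_mem_Icc {t : ℕ} (ha : a ∈ Finset.Icc 1 t) (hb : b ∈ Finset.Icc 1 t)
    (hc : c ∈ Finset.Icc 1 t) : Equiv.swap a b c ∈ Finset.Icc 1 t := by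
  rw [Equiv.swap_apply_def]
  split_ifs <;> assumption

/-- Both edges at a common vertex `w` are swapped or both are kept, according as `w` is or is not
in the component of `v`. -/
lemma IsProperEdgeColoring.interchange (hf : IsProperEdgeColoring G t f)
    (ha : a ∈ Finset.Icc 1 t) (hb : b ∈ Finset.Icc 1 t) :
    IsProperEdgeColoring G t (interchange G f a b v) := by
  refine ⟨fun e he => ?_, fun e₁ he₁ e₂ he₂ hne ⟨w, hw₁, hw₂⟩ => ?_⟩
  · by_cases hr : (twoColorSub G f a b).Reachable v e.out.1
    · rw [interchange_apply_of_reachable hr he e.out_fst_mem]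
      exact swap_mem_Icc ha hb (hf.1 e he)
    · rw [interchange_apply_of_not_reachable hr e.out_fst_mem]
      exact hf.1 e he
  by_cases hr : (twoColorSub G f a b).Reachable v w
  · rw [interchange_apply_of_reachable hr he₁ hw₁, interchange_apply_of_reachable hr he₂ hw₂,
      (Equiv.injective _).ne_iff]
    exact hf.2 e₁ he₁ e₂ he₂ hne ⟨w, hw₁, hw₂⟩
  · rw [interchange_apply_of_not_reachable hr hw₁, interchange_apply_of_not_reachable hr hw₂]
    exact hf.2 e₁ he₁ e₂ he₂ hne ⟨w, hw₁, hw₂⟩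

lemma MissingAt.interchange_of_reachable (h : MissingAt G t f u c) (ha : a ∈ Finset.Icc 1 t)
    (hb : b ∈ Finset.Icc 1 t) (hu : (twoColorSub G f a b).Reachable v u) :
    MissingAt G t (interchange G f a b v) u (Equiv.swap a b c) := by
  refine ⟨swap_mem_Icc ha hb h.1, fun ⟨e, he, hue, hfe⟩ => h.2 ⟨e, he, hue, ?_⟩⟩
  rwa [interchange_apply_of_reachable hu he hue, Equiv.apply_eq_iff_eq] at hfe

lemma MissingAt.interchange_of_not_reachable (h : MissingAt G t f u c)
    (hu : ¬ (twoColorSub G f a b).Reachable v u) : MissingAt G t (interchange G f a b v) u c :=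
  ⟨h.1, fun ⟨e, he, hue, hfe⟩ =>
    h.2 ⟨e, he, hue, interchange_apply_of_not_reachable hu hue ▸ hfe⟩⟩

lemma MissingAt.interchange_of_ne (h : MissingAt G t f u c) (ha : a ∈ Finset.Icc 1 t)
    (hb : b ∈ Finset.Icc 1 t) (hca : c ≠ a) (hcb : c ≠ b) :
    MissingAt G t (interchange G f a b v) u c := by
  by_cases hu : (twoColorSub G f a b).Reachable v u
  · simpa [Equiv.swap_apply_of_ne_of_ne hca hcb] using h.interchange_of_reachable ha hb hu
  · exact h.interchange_of_not_reachable hu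

end Interchange

/-- A Vizing fan at `x` for the uncoloured edge `x (z 0)`. -/
structure IsFan (H : SimpleGraph V) (t : ℕ) (f : Sym2 V → ℕ) (x : V) (z : ℕ → V) (d : ℕ → ℕ)
    (m : ℕ) : Prop where
  ne_zero : x ≠ z 0
  adj : ∀ i < m, H.Adj x (z (i + 1))
  injOn : Set.InjOn z (Set.Iic m)
  missingAt : ∀ i ≤ m, MissingAt H t f (z i) (d i)
  color : ∀ i < m, f s(x, z (i + 1)) = d i

namespace IsFan

variable {H : SimpleGraph V} {t : ℕ} {f : Sym2 V → ℕ} {x : V} {z : ℕ → V} {d : ℕ → ℕ} {m i j : ℕ}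

lemma ne (hfan : IsFan H t f x z d m) (hi : i ≤ m) : x ≠ z i := by
  cases i with
  | zero => exact hfan.ne_zero
  | succ i => exact (hfan.adj i hi).ne

lemma mono (hfan : IsFan H t f x z d m) {m' : ℕ} (hm : m' ≤ m) : IsFan H t f x z d m' where
  ne_zero := hfan.ne_zero
  adj i hi := hfan.adj i (hi.trans_le hm)
  injOn := hfan.injOn.mono (Set.Iic_subset_Iic.2 hm)
  missingAt i hi := hfan.missingAt i (hi.trans hm)
  color i hi := hfan.color i (hi.trans_le hm)

lemma apply_ne (hfan : IsFan H t f x z d m) (hi : i ≤ m) (hj : j ≤ m) (hij : i ≠ j) :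
    z i ≠ z j :=
  fun h => hij (hfan.injOn hi hj h)

lemma edge_ne (hfan : IsFan H t f x z d m) (hi : i < m) (hj : j < m) (hij : i ≠ j) :
    s(x, z (i + 1)) ≠ s(x, z (j + 1)) := by
  rw [Ne, Sym2.congr_right]
  exact hfan.apply_ne hi hj (by omega)

lemma mem_colorsAt (hfan : IsFan H t f x z d m) (hi : i < m) : d i ∈ colorsAt H f x :=
  _root_.mem_colorsAt.2 ⟨_, hfan.adj i hi, hfan.color i hi⟩

lemma color_ne (hfan : IsFan H t f x z d m) (hf : IsProperEdgeColoring H t f) (hi : i < m)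
    (hj : j < m) (hij : i ≠ j) : d i ≠ d j := by
  rw [← hfan.color i hi, ← hfan.color j hj]
  exact hf.2 _ (hfan.adj i hi) _ (hfan.adj j hj) (hfan.edge_ne hi hj hij)
    ⟨x, Sym2.mem_mk_left _ _, Sym2.mem_mk_left _ _⟩

lemma lt_card [Fintype V] (hfan : IsFan H t f x z d m) : m < Fintype.card V := by
  have := Finset.card_le_card_of_injOn z (fun _ _ => Finset.mem_univ _)
    (by simpa [Set.InjOn, Nat.lt_succ_iff] using hfan.injOn : Set.InjOn z (Finset.range (m + 1)))
  simpa [Nat.lt_succ_iff] using this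

lemma snoc (hfan : IsFan H t f x z d m) {w : V} {c : ℕ} (hw : H.Adj x w) (hwz : ∀ i ≤ m, w ≠ z i)
    (hwc : f s(x, w) = d m) (hc : MissingAt H t f w c) :
    IsFan H t f x (Function.update z (m + 1) w) (Function.update d (m + 1) c) (m + 1) := by
  have hz : ∀ i ≤ m, Function.update z (m + 1) w i = z i := fun i hi =>
    Function.update_of_ne (by omega) _ _
  have hd : ∀ i ≤ m, Function.update d (m + 1) c i = d i := fun i hi =>
    Function.update_of_ne (by omega) _ _
  refine ⟨by simpa using hfan.ne_zero, fun i hi => ?_, fun i hi j hj hij => ?_, fun i hi => ?_,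
    fun i hi => ?_⟩
  · rcases (Nat.lt_succ_iff.1 hi).lt_or_eq with hi | rfl
    · simpa [hz (i + 1) hi] using hfan.adj i hi
    · simpa using hw
  · simp only [Set.mem_Iic] at hi hj
    rcases hi.lt_or_eq with hi | rfl <;> rcases hj.lt_or_eq with hj | rfl
    · rw [hz i (by omega), hz j (by omega)] at hij
      exact hfan.injOn (Set.mem_Iic.2 (by omega)) (Set.mem_Iic.2 (by omega)) hij
    · simp only [Function.update_self, hz i (by omega)] at hij
      exact (hwz i (by omega) hij.symm).elim
    · simp only [Function.update_self, hz j (by omega)] at hij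
      exact (hwz j (by omega) hij).elim
    · rfl
  · rcases hi.lt_or_eq with hi | rfl
    · rw [hz i (by omega), hd i (by omega)]
      exact hfan.missingAt i (by omega)
    · simpa using hc
  · rcases (Nat.lt_succ_iff.1 hi).lt_or_eq with hi | rfl
    · rw [hz (i + 1) hi, hd i hi.le]
      exact hfan.color i hi
    · simpa [hd i le_rfl] using hwc

/-- Rotating the fan: recolour its last edge `x (z m)` with `d m` and recurse on the shorter fan,
for which the old colour `d (m - 1)` of that edge is now missing at `x`. -/
lemma exists_isProperEdgeColoring (hfan : IsFan H t f x z d m)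
    (hf : IsProperEdgeColoring H t f) (hx : MissingAt H t f x (d m)) :
    ∃ g, IsProperEdgeColoring (H ⊔ edge x (z 0)) t g := by
  induction m generalizing f with
  | zero => exact ⟨_, hf.update_sup_edge hfan.ne_zero hx (hfan.missingAt 0 le_rfl)⟩
  | succ m ih =>
    have hadj := hfan.adj m m.lt_succ_self
    have hf' := hf.update_sup_edge (hfan.ne le_rfl) hx (hfan.missingAt (m + 1) le_rfl)
    rw [sup_edge_of_adj _ hadj] at hf'
    have hxm := hf.missingAt_update hadj fun h => hx.2 (_root_.mem_colorsAt.2 ⟨_, hadj, h⟩)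
    rw [hfan.color m m.lt_succ_self] at hxm
    refine ih { hfan.mono m.le_succ with
      missingAt := fun i hi => ?_
      color := fun i hi => ?_ } hf' hxm
    · have hzi : z i ∉ s(x, z (m + 1)) := by
        rw [Sym2.mem_iff, not_or]
        exact ⟨(hfan.ne (by omega)).symm, hfan.apply_ne (by omega) le_rfl (by omega)⟩
      rw [MissingAt, colorsAt_update_of_notMem hzi]
      exact hfan.missingAt i (by omega)
    · rw [Function.update_of_ne (hfan.edge_ne (by omega) m.lt_succ_self (by omega))]
      exact hfan.color i (by omega)

end IsFan

section Vizing

variable {H : SimpleGraph V} {t : ℕ} {f : Sym2 V → ℕ} {x y : V}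

lemma exists_maximal_isFan [Fintype V] {c : ℕ} (hne : x ≠ y) (hxy : ¬ H.Adj x y)
    (hy : MissingAt H t f y c) (hN : ∀ w, H.Adj x w → ∃ c, MissingAt H t f w c) :
    ∃ z d m, z 0 = y ∧ IsFan H t f x z d m ∧
      ∀ w, H.Adj x w → f s(x, w) = d m → ∃ i < m, w = z (i + 1) := by
  let P : ℕ → Prop := fun m => ∃ z d, z 0 = y ∧ IsFan H t f x z d m
  have h0 : P 0 := ⟨fun _ => y, fun _ => c, rfl, hne, by simp, fun i hi j hj _ => by
    simp_all, fun _ _ => hy, by simp⟩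
  obtain ⟨z, d, hz0, hfan⟩ : P (Nat.findGreatest P (Fintype.card V)) :=
    Nat.findGreatest_spec (Nat.zero_le _) h0
  refine ⟨z, d, _, hz0, hfan, fun w hw hwc => ?_⟩
  by_contra! hwz
  obtain ⟨c', hc'⟩ := hN w hw
  have hwz' : ∀ i ≤ Nat.findGreatest P (Fintype.card V), w ≠ z i := by
    rintro (_ | i) hi rfl
    exacts [hxy (hz0 ▸ hw), hwz i hi rfl]
  have hsnoc := hfan.snoc hw hwz' hwc hc'
  exact Nat.findGreatest_is_greatest (Nat.lt_succ_self _) hsnoc.lt_card.le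
    ⟨_, _, by simpa using hz0, hsnoc⟩

lemma IsFan.interchange_of_ne {z : ℕ → V} {d : ℕ → ℕ} {m i₀ i α : ℕ}
    (hfan : IsFan H t f x z d m) (hf : IsProperEdgeColoring H t f) (hα : MissingAt H t f x α)
    (hi₀ : i₀ < m) (hβ : d i₀ = d m) (hi : i < m) (hne : i ≠ i₀) :
    MissingAt H t (interchange H f α (d m) x) (z i) (d i) ∧
      interchange H f α (d m) x s(x, z (i + 1)) = d i := by
  have hdα : d i ≠ α := fun h => hα.2 (h ▸ hfan.mem_colorsAt hi)
  have hdβ : d i ≠ d m := hβ ▸ hfan.color_ne hf hi hi₀ hne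
  refine ⟨(hfan.missingAt i hi.le).interchange_of_ne hα.1 (hfan.missingAt m le_rfl).1 hdα hdβ, ?_⟩
  rw [← hfan.color i hi] at hdα hdβ ⊢
  exact interchange_apply_of_ne hdα hdβ

/-- The Kempe step: if the last colour `β = d m` of the fan is used at `x` (on the fan edge
`x (z (i₀ + 1))`), swap a colour `α` missing at `x` with `β` on the component of `x` in the
`α`/`β`-subgraph. That component is a path starting at `x`, so it misses `z i₀` or `z m`, and
either the fan up to `i₀` or the whole fan, with `d i₀` replaced by `α`, ends in a colour missing
at `x`. -/
lemma IsFan.exists_isFan_missingAt [Fintype V] {z : ℕ → V} {d : ℕ → ℕ} {m i₀ α : ℕ}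
    (hfan : IsFan H t f x z d m) (hf : IsProperEdgeColoring H t f) (hα : MissingAt H t f x α)
    (hi₀ : i₀ < m) (hβ : d i₀ = d m) :
    ∃ g d' m', IsProperEdgeColoring H t g ∧ IsFan H t g x z d' m' ∧ MissingAt H t g x (d' m') := by
  have hβt := (hfan.missingAt m le_rfl).1
  set K := twoColorSub H f α (d m)
  set g := interchange H f α (d m) x with hg_def
  have hg : IsProperEdgeColoring H t g := hf.interchange hα.1 hβt
  have hgx : MissingAt H t g x (d m) := by
    simpa using hα.interchange_of_reachable hα.1 hβt (Reachable.refl x)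
  have hmiss i (hi : i < m) (hne : i ≠ i₀) := (hfan.interchange_of_ne hf hα hi₀ hβ hi hne).1
  have hcol i (hi : i < m) (hne : i ≠ i₀) := (hfan.interchange_of_ne hf hα hi₀ hβ hi hne).2
  by_cases hr : K.Reachable x (z i₀)
  · have hrm : ¬ K.Reachable x (z m) :=
      not_reachable_of_degree_le_one hf.degree_twoColorSub_le_two (hfan.ne hi₀.le)
        (hfan.ne le_rfl) (hfan.apply_ne hi₀.le le_rfl hi₀.ne)
        (hf.degree_twoColorSub_le_one (.inl hα.2))
        (hf.degree_twoColorSub_le_one (.inr (hβ ▸ (hfan.missingAt i₀ hi₀.le).2)))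
        (hf.degree_twoColorSub_le_one (.inr (hfan.missingAt m le_rfl).2)) hr
    refine ⟨g, Function.update d i₀ α, m, hg,
      { hfan with missingAt := fun i hi => ?_, color := fun i hi => ?_ },
      by rwa [Function.update_of_ne hi₀.ne']⟩
    · rcases eq_or_ne i i₀ with rfl | hne
      · simpa [hβ] using (hfan.missingAt i hi).interchange_of_reachable hα.1 hβt hr
      rw [Function.update_of_ne hne]
      rcases hi.lt_or_eq with hi | rfl
      · exact hmiss i hi hne
      · exact (hfan.missingAt i le_rfl).interchange_of_not_reachable hrm
    · rcases eq_or_ne i i₀ with rfl | hne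
      · rw [Function.update_self, hg_def, interchange_apply_of_reachable (Reachable.refl x)
          (hfan.adj i hi) (Sym2.mem_mk_left _ _), hfan.color i hi, hβ, Equiv.swap_apply_right]
      · rw [Function.update_of_ne hne]
        exact hcol i hi hne
  · refine ⟨g, d, i₀, hg, ?_, hβ ▸ hgx⟩
    refine { hfan.mono hi₀.le with
      missingAt := fun i hi => ?_
      color := fun i hi => hcol i (hi.trans hi₀) hi.ne }
    rcases hi.lt_or_eq with hi | rfl
    · exact hmiss i (hi.trans hi₀) hi.ne
    · exact (hfan.missingAt i hi₀.le).interchange_of_not_reachable hr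

/-- Vizing's fan argument: take a maximal fan at `x`; if its last colour is missing at `x`, rotate
it, otherwise first make it so by the Kempe step. -/
theorem exists_isProperEdgeColoring_sup_edge [Fintype V] (hf : IsProperEdgeColoring H t f)
    (hne : x ≠ y) (hxy : ¬ H.Adj x y) (hx : ∃ c, MissingAt H t f x c)
    (hy : ∃ c, MissingAt H t f y c) (hN : ∀ w, H.Adj x w → ∃ c, MissingAt H t f w c) :
    ∃ g, IsProperEdgeColoring (H ⊔ edge x y) t g := by
  obtain ⟨c, hy⟩ := hy
  obtain ⟨z, d, m, rfl, hfan, hmax⟩ := exists_maximal_isFan hne hxy hy hN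
  by_cases hdm : d m ∈ colorsAt H f x
  · obtain ⟨w, hw, hwc⟩ := mem_colorsAt.1 hdm
    obtain ⟨i₀, hi₀, rfl⟩ := hmax w hw hwc
    obtain ⟨α, hα⟩ := hx
    obtain ⟨g, d', m', hg, hfan', hx'⟩ :=
      hfan.exists_isFan_missingAt hf hα hi₀ ((hfan.color i₀ hi₀).symm.trans hwc)
    exact hfan'.exists_isProperEdgeColoring hg hx'
  · exact hfan.exists_isProperEdgeColoring hf ⟨(hfan.missingAt m le_rfl).1, hdm⟩

end Vizing

theorem exists_isProperEdgeColoring_of_isAcyclic [Fintype V] (G : SimpleGraph V)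
    [DecidableRel G.Adj] (t : ℕ) (hdeg : ∀ v, G.degree v ≤ t)
    (hac : (G.induce {v | G.degree v = t}).IsAcyclic) : ∃ f, IsProperEdgeColoring G t f := by
  induction hn : G.edgeFinset.card using Nat.strong_induction_on generalizing G with
  | _ n ih =>
  rcases G.edgeSet.eq_empty_or_nonempty with hE | hE
  · exact ⟨fun _ => 1, by simp [IsProperEdgeColoring, hE]⟩
  obtain ⟨x, y, hxy, hlow⟩ := exists_adj_forall_adj_notMem hac hE
  set H := G.deleteEdges {s(x, y)}
  have hHG : H ≤ G := deleteEdges_le _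
  have hdegH : ∀ v, H.degree v ≤ G.degree v := fun v => degree_le_of_le hHG
  have hacH : (H.induce {v | H.degree v = t}).IsAcyclic :=
    have hmaps : Set.MapsTo (Hom.ofLE hHG) {v | H.degree v = t} {v | G.degree v = t} :=
      fun v hv => (hdeg v).antisymm (hv ▸ hdegH v)
    hac.comap _ (induceHom_injective _ hmaps Function.injective_id.injOn)
  have hHxy : ¬ H.Adj x y := by simp [H]
  have hcard : H.edgeFinset.card < n := hn ▸ Finset.card_lt_card
    (edgeFinset_ssubset_edgeFinset.2 (lt_of_le_of_ne hHG fun h => hHxy (h ▸ hxy)))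
  obtain ⟨f, hf⟩ := ih _ hcard H (fun v => (hdegH v).trans (hdeg v)) hacH rfl
  rw [← deleteEdges_sup_edge hxy]
  refine exists_isProperEdgeColoring_sup_edge hf hxy.ne hHxy
    (exists_missingAt f ((degree_deleteEdges_lt hxy).trans_le (hdeg x)))
    (exists_missingAt f ?_) fun w hw => exists_missingAt f ?_
  · rw [Sym2.eq_swap]
    exact (degree_deleteEdges_lt hxy.symm).trans_le (hdeg y)
  · have hwy : w ≠ y := by rintro rfl; exact hHxy hw
    exact (hdegH w).trans_lt ((hdeg w).lt_of_ne (hlow w (hHG hw) hwy))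

theorem class1_of_maxDegree_acyclic_general [Fintype V] (G : SimpleGraph V)
    [DecidableRel G.Adj]
    (hac : (SimpleGraph.induce {v | G.degree v = G.maxDegree} G).IsAcyclic) :
    chromaticIndex G = G.maxDegree := by
  obtain ⟨f, hf⟩ := exists_isProperEdgeColoring_of_isAcyclic G _ G.degree_le_maxDegree hac
  refine le_antisymm (Nat.sInf_le ⟨f, hf⟩) (le_csInf ⟨_, f, hf⟩ fun t ⟨g, hg⟩ => ?_)
  exact G.maxDegree_le_of_forall_degree_le t hg.degree_le

/-- if the subgraph induced by the vertices of maximum degree is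
acyclic and `G` has an edge, then `χ'(G) = Δ(G)` (`G` is Class 1). -/
theorem class1_of_maxDegree_acyclic [Fintype V] (G : SimpleGraph V)
    [DecidableRel G.Adj]
    (hac : (SimpleGraph.induce {v | G.degree v = G.maxDegree} G).IsAcyclic)
    (hne : G.edgeSet.Nonempty) :
    chromaticIndex G = G.maxDegree :=
  class1_of_maxDegree_acyclic_general G hac
end
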